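/- arXiv:1707.00179 — 9 statements merged into one kernel-verified Lean document; each statement's English description precedes it below -/
import Mathlib

section
/- Let f, g, h, k be complex numbers with g ≠ 0 and f^2 + 4*g ≠ 0, and let R : ℕ → ℂ satisfy R 0 = h, R 1 = k, R (n+2) = f * R (n+1) + g * R n. Then for all m, n ≥ 1: (k^2 - f*k*h - g*h^2) * R (m+n) + (f^2*h - f*k + g*h) * R m * R n + h*g^2 * R (m-1) * R (n-1) + (f*h - k)*g*(R n * R (m-1) + R m * R (n-1)) = 0. -/
lemma key9 (f g h k : ℂ) (R : ℕ → ℂ)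
    (h0 : R 0 = h) (h1 : R 1 = k)
    (hrec : ∀ n, R (n + 2) = f * R (n + 1) + g * R n) :
    ∀ b a : ℕ,
      (k^2 - f*k*h - g*h^2) * R (a + b + 2)
      + (f^2*h - f*k + g*h) * R (a+1) * R (b+1)
      + h*g^2 * R a * R b
      + (f*h - k)*g*(R (b+1) * R a + R (a+1) * R b) = 0 := by
  intro b
  induction b using Nat.strong_induction_on with
  | _ b ih =>
    match b with
    | 0 =>
      intro a
      have e : R (a + 0 + 2) = f * R (a + 1) + g * R a := by
        have := hrec a; simpa using this
      rw [e, h0, h1]; ring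
    | 1 =>
      intro a
      have e2 : R 2 = f * k + g * h := by simpa [h0, h1] using hrec 0
      have e : R (a + 1 + 2) = f * (f * R (a+1) + g * R a) + g * R (a+1) := by
        rw [show a + 1 + 2 = (a+1) + 2 from rfl, hrec (a+1),
          show a + 1 + 1 = a + 2 from by ring, hrec a]
      rw [e, e2, h1]; ring
    | b + 2 =>
      intro a
      have i0 := ih b (by omega) a
      have i1 := ih (b+1) (by omega) a
      have e1 : R (a + (b+2) + 2) = f * R (a + (b+1) + 2) + g * R (a + b + 2) := by
        rw [show a + (b+2) + 2 = (a + b + 2) + 2 from by ring, hrec (a+b+2),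
          show a + b + 2 + 1 = a + (b+1) + 2 from by ring]
      have e2 : R (b + 2 + 1) = f * R (b + 1 + 1) + g * R (b+1) := by
        have : b + 2 + 1 = (b+1) + 2 := by ring
        rw [this, hrec (b+1)]
      have e3 : R (b + 2) = f * R (b + 1) + g * R b := hrec b
      have hb1 : R (b+1+1) = f * R (b+1) + g * R b := by
        rw [show b+1+1 = b+2 from rfl, hrec b]
      rw [e1, e2, e3]
      linear_combination f * i1 + g * i0 -
        f * ((f^2*h - f*k + g*h) * R (a+1) + (f*h-k)*g*R a) * hb1

theorem stmt_9 (f g h k : ℂ) (hg : g ≠ 0) (hfg : f^2 + 4*g ≠ 0) (R : ℕ → ℂ)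
    (h0 : R 0 = h) (h1 : R 1 = k)
    (hrec : ∀ n, R (n + 2) = f * R (n + 1) + g * R n) :
    ∀ m n : ℕ, 1 ≤ m → 1 ≤ n →
      (k^2 - f*k*h - g*h^2) * R (m + n)
      + (f^2*h - f*k + g*h) * R m * R n
      + h*g^2 * R (m - 1) * R (n - 1)
      + (f*h - k)*g*(R n * R (m - 1) + R m * R (n - 1)) = 0 := by
  intro m n hm hn
  obtain ⟨a, rfl⟩ : ∃ a, m = a + 1 := ⟨m - 1, by omega⟩
  obtain ⟨b, rfl⟩ : ∃ b, n = b + 1 := ⟨n - 1, by omega⟩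
  have := key9 f g h k R h0 h1 hrec b a
  have e : a + 1 + (b + 1) = a + b + 2 := by ring
  simpa [e] using this
end

section
/- Let L : ℕ → ℤ be the Lucas sequence (L 0 = 2, L 1 = 1, L (n+2) = L (n+1) + L n). Then for every n, (L n)^2 = (-1)^n * Matrix.det ((1 : Matrix (Fin 2) (Fin 2) ℤ) + (!![-2, 1; 1, -1])^n). -/
lemma cassini_aux (n : ℕ) :
    (Nat.fib (n+1) : ℤ)^2 - Nat.fib (n+1) * Nat.fib n - (Nat.fib n : ℤ)^2 = (-1)^n := by
  induction n with
  | zero => simp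
  | succ k ih =>
      have h : (Nat.fib (k+2) : ℤ) = Nat.fib (k+1) + Nat.fib k := by
        rw [Nat.fib_add_two]; push_cast; ring
      rw [h]
      linear_combination (-1 : ℤ) * ih

lemma matpow_aux (n : ℕ) :
    (!![-2, 1; 1, -1] : Matrix (Fin 2) (Fin 2) ℤ)^n =
      !![((-1)^n * (Nat.fib (2*n+1) : ℤ)), (-1)^n * (-(Nat.fib (2*n) : ℤ));
         (-1)^n * (-(Nat.fib (2*n) : ℤ)), (-1)^n * ((Nat.fib (2*n+1) : ℤ) - Nat.fib (2*n))] := by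
  induction n with
  | zero => simp [Matrix.one_fin_two]
  | succ k ih =>
      have h1 : (Nat.fib (2*(k+1)) : ℤ) = Nat.fib (2*k+1) + Nat.fib (2*k) := by
        have : 2*(k+1) = 2*k + 2 := by ring
        rw [this, Nat.fib_add_two]; push_cast; ring
      have h2 : (Nat.fib (2*(k+1)+1) : ℤ) = Nat.fib (2*(k+1)) + Nat.fib (2*k+1) := by
        have : 2*(k+1)+1 = (2*k+1) + 2 := by ring
        rw [this, Nat.fib_add_two]
        have : 2*(k+1) = 2*k + 1 + 1 := by ring
        rw [this]; push_cast; ring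
      rw [pow_succ, ih]
      ext i j
      fin_cases i <;> fin_cases j <;>
        simp [Matrix.mul_apply, Fin.sum_univ_two, h1, h2, pow_succ] <;> ring

theorem stmt_11 (L : ℕ → ℤ) (h0 : L 0 = 2) (h1 : L 1 = 1)
    (hrec : ∀ n, L (n + 2) = L (n + 1) + L n) :
    ∀ n : ℕ, (L n)^2 = (-1)^n * Matrix.det
      ((1 : Matrix (Fin 2) (Fin 2) ℤ) + (!![-2, 1; 1, -1])^n) := by
  have hL : ∀ m, L m = 2 * (Nat.fib (m+1) : ℤ) - Nat.fib m := by
    intro m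
    induction m using Nat.twoStepInduction with
    | zero => simpa using h0
    | one => simp [h1]
    | more k ih1 ih2 =>
        have hf : (Nat.fib (k+3) : ℤ) = Nat.fib (k+2) + Nat.fib (k+1) := by
          rw [show k+3 = (k+1)+2 from rfl, Nat.fib_add_two]; push_cast; ring
        have hf2 : (Nat.fib (k+2) : ℤ) = Nat.fib (k+1) + Nat.fib k := by
          rw [Nat.fib_add_two]; push_cast; ring
        rw [hrec k, ih1, ih2, show k+2+1 = k+3 from rfl, show k+1+1 = k+2 from rfl, hf, hf2]
        ring
  intro n
  obtain ⟨a, ha⟩ : ∃ a : ℤ, (Nat.fib (n+1) : ℤ) = a := ⟨_, rfl⟩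
  obtain ⟨b, hb⟩ : ∃ b : ℤ, (Nat.fib n : ℤ) = b := ⟨_, rfl⟩
  have hc : a^2 - a*b - b^2 = (-1)^n := by rw [← ha, ← hb]; exact cassini_aux n
  have hp : (Nat.fib (2*n+1) : ℤ) = a^2 + b^2 := by
    rw [Nat.fib_two_mul_add_one]; push_cast [ha, hb]; ring
  have hq : (Nat.fib (2*n) : ℤ) = 2*a*b - b^2 := by
    rw [Nat.fib_two_mul]
    have hle : Nat.fib n ≤ 2 * Nat.fib (n+1) :=
      le_trans (Nat.fib_le_fib_succ) (by omega)
    push_cast [hle, ha, hb]; ring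
  rw [matpow_aux n, Matrix.det_fin_two, hL n, ha, hb]
  simp only [Matrix.add_apply, Matrix.one_apply_eq, Matrix.one_apply_ne,
    Matrix.cons_val', Matrix.cons_val_zero, Matrix.cons_val_one, Matrix.head_cons,
    Matrix.head_fin_const, Matrix.empty_val', Matrix.cons_val_fin_one, Matrix.of_apply,
    ne_eq, Fin.zero_eq_one_iff, Fin.one_eq_zero_iff, OfNat.ofNat_ne_one, not_false_iff]
  rw [hp, hq]
  rcases Nat.even_or_odd n with he | ho
  · rw [he.neg_one_pow] at hc ⊢
    have hD : (a^2+b^2)*((a^2+b^2) - (2*a*b - b^2)) - (2*a*b - b^2)^2 = 1 := by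
      linear_combination (a^2 - a*b - b^2 + 1) * hc
    linear_combination 2*hc - hD
  · rw [ho.neg_one_pow] at hc ⊢
    have hD : (a^2+b^2)*((a^2+b^2) - (2*a*b - b^2)) - (2*a*b - b^2)^2 = 1 := by
      linear_combination (a^2 - a*b - b^2 - 1) * hc
    linear_combination 2*hc + hD
end

section
/- Let P : ℕ → ℤ be the Pell sequence (P 0 = 0, P 1 = 1, P (n+2) = 2 * P (n+1) + P n). Then for every n ≥ 1, 8 * (P n)^2 = (-1)^(n+1) * Matrix.det (-(1 : Matrix (Fin 2) (Fin 2) ℤ) + (!![-5, 2; 2, -1])^n). -/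
theorem stmt_12 (P : ℕ → ℤ) (h0 : P 0 = 0) (h1 : P 1 = 1)
    (hrec : ∀ n, P (n + 2) = 2 * P (n + 1) + P n) :
    ∀ n : ℕ, 1 ≤ n →
      8 * (P n)^2 = (-1)^(n+1) * Matrix.det
        (-(1 : Matrix (Fin 2) (Fin 2) ℤ) + (!![-5, 2; 2, -1])^n) := by
  -- Cassini-type identity
  have hC : ∀ n : ℕ, P (n+1)^2 - 2*P (n+1)*P n - (P n)^2 = (-1)^n := by
    intro n
    induction n with
    | zero => simp [h0, h1]
    | succ k ih =>
      rw [hrec k, pow_succ]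
      linear_combination (-1 : ℤ) * ih
  -- doubling identities
  have hD : ∀ n : ℕ, P (2*n+1) = P (n+1)^2 + P n^2 ∧
      P (2*n+2) = 2*P (n+1)^2 + 2*P (n+1)*P n := by
    intro n
    induction n with
    | zero => constructor <;> simp [h0, h1, hrec 0]
    | succ k ih =>
      obtain ⟨ih1, ih2⟩ := ih
      have e1 : P (2*k+3) = 2 * P (2*k+2) + P (2*k+1) := by
        have := hrec (2*k+1)
        rwa [show 2*k+1+2 = 2*k+3 by ring, show 2*k+1+1 = 2*k+2 by ring] at this
      have e2 : P (2*k+4) = 2 * P (2*k+3) + P (2*k+2) := by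
        have := hrec (2*k+2)
        rwa [show 2*k+2+2 = 2*k+4 by ring, show 2*k+2+1 = 2*k+3 by ring] at this
      have e3 : P (k+2) = 2*P (k+1) + P k := hrec k
      rw [show 2*(k+1)+1 = 2*k+3 by ring, show 2*(k+1)+2 = 2*k+4 by ring]
      constructor
      · rw [e1, ih1, ih2, e3]; ring
      · rw [e2, e1, ih1, ih2, e3]; ring
  -- closed form for matrix powers
  have hA : ∀ n : ℕ, (!![-5, 2; 2, -1] : Matrix (Fin 2) (Fin 2) ℤ)^n =
      !![(-1)^n * P (2*n+1), (-1)^n * (-P (2*n));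
         (-1)^n * (-P (2*n)), (-1)^n * (P (2*n+1) - 2*P (2*n))] := by
    intro n
    induction n with
    | zero => simp [h0, h1, Matrix.one_fin_two]
    | succ k ih =>
      have e2 : P (2*k+2) = 2 * P (2*k+1) + P (2*k) := hrec (2*k)
      have e1 : P (2*k+3) = 2 * P (2*k+2) + P (2*k+1) := by
        have := hrec (2*k+1)
        rwa [show 2*k+1+2 = 2*k+3 by ring, show 2*k+1+1 = 2*k+2 by ring] at this
      rw [pow_succ, ih, Matrix.mul_fin_two,
        show 2*(k+1)+1 = 2*k+3 by ring, show 2*(k+1) = 2*k+2 by ring, e1, e2]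
      ext i j
      fin_cases i <;> fin_cases j <;> simp [pow_succ] <;> ring
  intro n hn
  rw [hA n]
  have hone : -(1 : Matrix (Fin 2) (Fin 2) ℤ) = !![-1, 0; 0, -1] := by
    rw [Matrix.one_fin_two]
    ext i j
    fin_cases i <;> fin_cases j <;> simp
  rw [hone]
  rw [show (!![-1,0;0,-1] : Matrix (Fin 2) (Fin 2) ℤ) +
      !![(-1)^n * P (2*n+1), (-1)^n * (-P (2*n));
         (-1)^n * (-P (2*n)), (-1)^n * (P (2*n+1) - 2*P (2*n))] =
      !![(-1)^n * P (2*n+1) - 1, (-1)^n * (-P (2*n));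
         (-1)^n * (-P (2*n)), (-1)^n * (P (2*n+1) - 2*P (2*n)) - 1] from by
    ext i j; fin_cases i <;> fin_cases j <;> simp <;> ring]
  rw [Matrix.det_fin_two_of]
  obtain ⟨hd1, hd2⟩ := hD n
  have hb : P (2*n) = 2*P (n+1)*P n - 2*P n^2 := by
    have e2 : P (2*n+2) = 2 * P (2*n+1) + P (2*n) := hrec (2*n)
    linear_combination hd2 - e2 - 2 * hd1
  rw [hd1, hb]
  have hCn := hC n
  rcases Nat.even_or_odd n with he | ho
  · rw [he.neg_one_pow] at hCn ⊢
    rw [(he.add_one).neg_one_pow]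
    linear_combination ((P (n+1)^2 - 2*P (n+1)*P n - P n^2) - 1) * hCn
  · rw [ho.neg_one_pow] at hCn ⊢
    rw [(ho.add_one).neg_one_pow]
    linear_combination (-(P (n+1)^2 - 2*P (n+1)*P n - P n^2) - 1) * hCn
end

section
/- Let Q : ℕ → ℤ be the Pell–Lucas sequence (Q 0 = 2, Q 1 = 2, Q (n+2) = 2 * Q (n+1) + Q n). Then for every n, (Q n)^2 = (-1)^n * Matrix.det ((1 : Matrix (Fin 2) (Fin 2) ℤ) + (!![-5, 2; 2, -1])^n). -/
theorem stmt_13 (Q : ℕ → ℤ) (h0 : Q 0 = 2) (h1 : Q 1 = 2)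
    (hrec : ∀ n, Q (n + 2) = 2 * Q (n + 1) + Q n) :
    ∀ n : ℕ, (Q n)^2 = (-1)^n * Matrix.det
      ((1 : Matrix (Fin 2) (Fin 2) ℤ) + (!![-5, 2; 2, -1])^n) := by
  set M : Matrix (Fin 2) (Fin 2) ℤ := !![-5, 2; 2, -1] with hM
  -- determinant of M^n is 1
  have hdetM : M.det = 1 := by simp [hM, Matrix.det_fin_two_of]
  have hdetpow : ∀ n : ℕ, (M ^ n).det = 1 := by
    intro n; rw [Matrix.det_pow, hdetM, one_pow]
  -- det (1 + A) = 2 + trace A when det A = 1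
  have hkey : ∀ n : ℕ, ((1 : Matrix (Fin 2) (Fin 2) ℤ) + M ^ n).det
      = 2 + (M ^ n).trace := by
    intro n
    have hd := hdetpow n
    rw [Matrix.det_fin_two] at hd ⊢
    rw [Matrix.trace_fin_two]
    simp [Matrix.one_apply]
    linarith [hd]
  -- Cayley-Hamilton: M^2 = -6 • M - 1
  have hM2 : M ^ 2 = (-6 : ℤ) • M - 1 := by
    ext i j
    fin_cases i <;> fin_cases j <;>
      simp [hM, pow_two, Matrix.mul_apply, Fin.sum_univ_two, Matrix.one_apply]
  have hrec2 : ∀ n : ℕ, M ^ (n + 2) = (-6 : ℤ) • M ^ (n + 1) - M ^ n := by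
    intro n
    calc M ^ (n + 2) = M ^ n * M ^ 2 := by rw [← pow_add]
    _ = M ^ n * ((-6 : ℤ) • M - 1) := by rw [hM2]
    _ = (-6 : ℤ) • (M ^ n * M) - M ^ n := by
        rw [mul_sub, mul_smul_comm, mul_one]
    _ = (-6 : ℤ) • M ^ (n + 1) - M ^ n := by rw [pow_succ]
  have htr : ∀ n : ℕ, (M ^ (n + 2)).trace
      = -6 * (M ^ (n + 1)).trace - (M ^ n).trace := by
    intro n
    rw [hrec2 n, Matrix.trace_sub, Matrix.trace_smul]
    simp
  -- Pell-Lucas identity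
  have hD : ∀ n : ℕ, Q (n + 1) ^ 2 - 2 * Q n * Q (n + 1) - Q n ^ 2
      = 8 * (-1) ^ (n + 1) := by
    intro n
    induction n with
    | zero => simp [h0, h1]
    | succ k ih =>
      have h := hrec k
      have h' : Q (k + 1 + 1) = 2 * Q (k + 1) + Q k := h
      rw [h', pow_succ (-1 : ℤ) (k + 1)]
      linear_combination (-1 : ℤ) * ih
  -- main two-step induction on Q n ^ 2 = (-1)^n * (2 + trace (M ^ n))
  have main : ∀ n : ℕ, Q n ^ 2 = (-1) ^ n * (2 + (M ^ n).trace)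
      ∧ Q (n + 1) ^ 2 = (-1) ^ (n + 1) * (2 + (M ^ (n + 1)).trace) := by
    intro n
    induction n with
    | zero =>
      constructor
      · simp [h0]
      · rw [h1, pow_one]
        rw [Matrix.trace_fin_two]
        simp [hM]
    | succ k ih =>
      obtain ⟨ih1, ih2⟩ := ih
      refine ⟨ih2, ?_⟩
      have ht := htr k
      have hq := hrec k
      have hd := hD k
      show Q (k + 2) ^ 2 = (-1) ^ (k + 2) * (2 + (M ^ (k + 2)).trace)
      linear_combination (Q (k + 2) + 2 * Q (k + 1) + Q k) * hq - ih1
        + 6 * ih2 - 2 * hd - (-1 : ℤ) ^ k * ht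
  intro n
  rw [hkey n]
  exact (main n).1
end

section
/- Let j : ℕ → ℤ be the Jacobsthal–Lucas sequence (j 0 = 2, j 1 = 1, j (n+2) = j (n+1) + 2 * j n). Then for every n, (j n)^2 = (-2)^n * Matrix.det ((1 : Matrix (Fin 2) (Fin 2) ℚ) + (!![-3/2, 1; 1/2, -1])^n). -/
theorem stmt_14 (j : ℕ → ℤ) (h0 : j 0 = 2) (h1 : j 1 = 1)
    (hrec : ∀ n, j (n + 2) = j (n + 1) + 2 * j n) :
    ∀ n : ℕ, ((j n : ℚ))^2 = (-2)^n * Matrix.det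
      ((1 : Matrix (Fin 2) (Fin 2) ℚ) + (!![-3/2, 1; 1/2, -1])^n) := by
  have jval : ∀ n : ℕ, (j n : ℚ) = 2 ^ n + (-1) ^ n := by
    have key : ∀ n : ℕ, (j n : ℚ) = 2 ^ n + (-1) ^ n ∧
        (j (n + 1) : ℚ) = 2 ^ (n + 1) + (-1) ^ (n + 1) := by
      intro n
      induction n with
      | zero => norm_num [h0, h1]
      | succ k ih =>
        refine ⟨ih.2, ?_⟩
        rw [hrec k]
        push_cast
        rw [ih.1, ih.2]
        ring
    exact fun n => (key n).1
  have powA : ∀ n : ℕ, (!![-3/2, 1; 1/2, -1] : Matrix (Fin 2) (Fin 2) ℚ) ^ n =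
      !![(2 * (-2:ℚ)^n + (-1/2)^n)/3, (2*(-1/2:ℚ)^n - 2*(-2)^n)/3;
         ((-1/2:ℚ)^n - (-2)^n)/3, ((-2:ℚ)^n + 2*(-1/2)^n)/3] := by
    intro n
    induction n with
    | zero =>
      rw [pow_zero, Matrix.one_fin_two]
      norm_num
    | succ k ih =>
      rw [pow_succ, ih, Matrix.mul_fin_two]
      congr 1 <;> push_cast <;> ring
  intro n
  rw [jval n, powA n, Matrix.one_fin_two]
  rw [show (!![(1:ℚ),0;0,1] + !![(2 * (-2:ℚ)^n + (-1/2)^n)/3, (2*(-1/2:ℚ)^n - 2*(-2)^n)/3;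
         ((-1/2:ℚ)^n - (-2)^n)/3, ((-2:ℚ)^n + 2*(-1/2)^n)/3]) =
      !![1 + (2 * (-2:ℚ)^n + (-1/2)^n)/3, (2*(-1/2:ℚ)^n - 2*(-2)^n)/3;
         ((-1/2:ℚ)^n - (-2)^n)/3, 1 + ((-2:ℚ)^n + 2*(-1/2)^n)/3] from by
    ext i k; fin_cases i <;> fin_cases k <;> simp]
  rw [Matrix.det_fin_two_of]
  have h2 : ((-2:ℚ))^n = (-1)^n * 2^n := by rw [← mul_pow]; norm_num
  have hh : ((-1/2:ℚ))^n = (-1)^n / 2^n := by rw [div_pow]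
  have he : ((-1:ℚ))^n * (-1)^n = 1 := by rw [← pow_add]; exact Even.neg_one_pow ⟨n, rfl⟩
  have hx : (2:ℚ)^n ≠ 0 := by positivity
  rw [h2, hh]
  generalize (2:ℚ)^n = x at hx ⊢
  generalize ((-1:ℚ))^n = e at he ⊢
  field_simp
  rcases mul_self_eq_one_iff.mp he with h | h <;> subst h <;> ring
end

section
/- Let T : ℕ → ℂ[X] (or evaluate at x ∈ ℂ) be the Chebyshev polynomials of the first kind: T 0 = 1, T 1 = x, T (n+2) = 2x * T (n+1) - T n. Then for every n and every x ∈ ℂ, 4 * (T n x)^2 = Matrix.det ((1 : Matrix (Fin 2) (Fin 2) ℂ) + (!![4*x^2 - 1, 2*x; -2*x, -1])^n). -/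
theorem stmt_15 (T : ℕ → ℂ → ℂ)
    (h0 : ∀ x, T 0 x = 1) (h1 : ∀ x, T 1 x = x)
    (hrec : ∀ n x, T (n + 2) x = 2 * x * T (n + 1) x - T n x) :
    ∀ (n : ℕ) (x : ℂ), 4 * (T n x)^2 = Matrix.det
      ((1 : Matrix (Fin 2) (Fin 2) ℂ) + (!![4*x^2 - 1, 2*x; -2*x, -1])^n) := by
  intro n x
  set M : Matrix (Fin 2) (Fin 2) ℂ := !![4*x^2 - 1, 2*x; -2*x, -1] with hM
  have hdetM : M.det = 1 := by
    rw [hM, Matrix.det_fin_two_of]; ring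
  have hdet : ∀ k, ((1 : Matrix (Fin 2) (Fin 2) ℂ) + M ^ k).det
      = 2 + Matrix.trace (M ^ k) := by
    intro k
    have hdk : (M ^ k).det = 1 := by rw [Matrix.det_pow, hdetM, one_pow]
    rw [Matrix.det_fin_two] at hdk ⊢
    simp only [Matrix.add_apply, Matrix.one_apply, Matrix.trace_fin_two]
    norm_num
    linear_combination hdk
  have hM2 : M * M = (4*x^2-2) • M - 1 := by
    ext i j
    fin_cases i <;> fin_cases j <;>
      simp [hM, Matrix.mul_apply, Fin.sum_univ_succ, Matrix.one_apply] <;> ring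
  have htr : ∀ k, Matrix.trace (M ^ (k+2))
      = (4*x^2-2) * Matrix.trace (M ^ (k+1)) - Matrix.trace (M ^ k) := by
    intro k
    have h : M ^ (k+2) = (4*x^2-2) • M ^ (k+1) - M ^ k := by
      rw [pow_add, pow_two, hM2, Matrix.mul_sub, Matrix.mul_one, Matrix.mul_smul,
        ← pow_succ]
    rw [h, Matrix.trace_sub, Matrix.trace_smul, smul_eq_mul]
  have inv : ∀ k, (T (k+1) x)^2 + (T k x)^2 - 2*x*(T (k+1) x)*(T k x) = 1 - x^2 := by
    intro k
    induction k with
    | zero => rw [h1, h0]; ring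
    | succ k ih => rw [hrec]; linear_combination ih
  have key : ∀ k, 4 * (T k x)^2 = 2 + Matrix.trace (M ^ k)
      ∧ 4 * (T (k+1) x)^2 = 2 + Matrix.trace (M ^ (k+1)) := by
    intro k
    induction k with
    | zero =>
      constructor
      · rw [h0, pow_zero, Matrix.trace_one]; norm_num
      · rw [h1, pow_one, hM, Matrix.trace_fin_two]; simp; ring
    | succ k ih =>
      refine ⟨ih.2, ?_⟩
      have e1 := ih.1
      have e2 := ih.2
      have e3 := inv k
      rw [hrec, htr]
      linear_combination (4*x^2-2) * e2 - e1 + 8 * e3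
  rw [hdet n]
  exact (key n).1
end

section
/- Let f, g, h, k be complex numbers and R : ℕ → ℂ satisfy R 0 = h, R 1 = k, R (n+2) = f * R (n+1) + g * R n. Define S n = ∑_{i=1}^{n} (k^2 - g*h^2 - f*h*k) * (-g)^(i-1). Then for all n ≥ 1: (f^2 - g^2 + 2*g - 1) * ∑_{i=1}^{n} (R i)^2 = (R (n+1))^2 - k^2 - g^2 * ((R n)^2 - h^2) + 2 * g * S n. -/
/-!
For a sequence with `R (n+2) = f R (n+1) + g R n`, the quadratic form
`R (n+1)^2 - g R n^2 - f R n R (n+1)` gets multiplied by `-g` at each step, so it equals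
`(k^2 - g h^2 - f h k) (-g)^n`. Squaring the recurrence and eliminating the cross term
`R n R (n+1)` with this invariant expresses `(f^2 - g^2 + 2g - 1) R (n+1)^2` as a telescoping
difference plus `2g` times the invariant; summing gives the identity.
-/

namespace LinearRecurrence

variable {A : Type*} [CommRing A] {f g : A} {R : ℕ → A}

theorem sq_sub_mul_sub_mul_eq_pow (hrec : ∀ n, R (n + 2) = f * R (n + 1) + g * R n) (n : ℕ) :
    R (n + 1) ^ 2 - g * R n ^ 2 - f * R n * R (n + 1)
      = (R 1 ^ 2 - g * R 0 ^ 2 - f * R 0 * R 1) * (-g) ^ n := by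
  induction n with
  | zero => ring
  | succ n ih =>
    rw [hrec, pow_succ]
    linear_combination (-g) * ih

theorem mul_sum_Icc_sq (hrec : ∀ n, R (n + 2) = f * R (n + 1) + g * R n) (n : ℕ) :
    (f ^ 2 - g ^ 2 + 2 * g - 1) * ∑ i ∈ Finset.Icc 1 n, R i ^ 2
      = R (n + 1) ^ 2 - R 1 ^ 2 - g ^ 2 * (R n ^ 2 - R 0 ^ 2)
        + 2 * g * ∑ i ∈ Finset.Icc 1 n, (R 1 ^ 2 - g * R 0 ^ 2 - f * R 0 * R 1) * (-g) ^ (i - 1) := by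
  induction n with
  | zero => simp
  | succ n ih =>
    rw [Finset.sum_Icc_succ_top (Nat.le_add_left 1 n),
      Finset.sum_Icc_succ_top (Nat.le_add_left 1 n), mul_add, ih, Nat.add_sub_cancel,
      ← sq_sub_mul_sub_mul_eq_pow hrec n, hrec n]
    ring

end LinearRecurrence

theorem stmt_16 (f g h k : ℂ) (R : ℕ → ℂ)
    (h0 : R 0 = h) (h1 : R 1 = k)
    (hrec : ∀ n, R (n + 2) = f * R (n + 1) + g * R n) :
    ∀ n : ℕ, 1 ≤ n →
      (f^2 - g^2 + 2*g - 1) * ∑ i ∈ Finset.Icc 1 n, (R i)^2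
        = (R (n+1))^2 - k^2 - g^2 * ((R n)^2 - h^2)
          + 2 * g * ∑ i ∈ Finset.Icc 1 n, (k^2 - g*h^2 - f*h*k) * (-g)^(i-1) := by
  intro n _
  subst h0 h1
  exact LinearRecurrence.mul_sum_Icc_sq hrec n
end

section
/- Let f, g, h, k be complex numbers and R : ℕ → ℂ satisfy R 0 = h, R 1 = k, R (n+2) = f * R (n+1) + g * R n. Define S n = ∑_{i=1}^{n} (k^2 - g*h^2 - f*h*k) * (-g)^(i-1). Then for all n ≥ 1: f * (f^2 - g^2 + 2*g - 1) * ∑_{i=1}^{n} R i * R (i-1) = (1 - g) * ((R (n+1))^2 - k^2) + g * (g - 1 + f^2) * ((R n)^2 - h^2) + (1 - f^2 - g^2) * S n. -/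
/-!
The quantity `R (m+1)^2 - f R (m+1) R m - g R m^2` is multiplied by `-g` at each step of the
recurrence (for the Fibonacci numbers this is Cassini's identity). Eliminating `R (m+2)`, the product
`f (f^2 - g^2 + 2g - 1) R (m+1) R m` is a combination of the consecutive differences of `R (m+1)^2`,
of `R m^2` and of this quantity, so the sum telescopes.
-/

open Finset

namespace SecondOrderRecurrence

variable {α : Type*} [CommRing α] {f g : α} {R : ℕ → α}

theorem cassini (hrec : ∀ n, R (n + 2) = f * R (n + 1) + g * R n) (m : ℕ) :
    R (m + 1) ^ 2 - f * R (m + 1) * R m - g * R m ^ 2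
      = (-g) ^ m * (R 1 ^ 2 - g * R 0 ^ 2 - f * R 0 * R 1) := by
  induction m with
  | zero => ring
  | succ m ih =>
    rw [hrec m, pow_succ]
    linear_combination (-g) * ih

theorem mul_sum_range_mul_succ (hrec : ∀ n, R (n + 2) = f * R (n + 1) + g * R n) (n : ℕ) :
    f * (f ^ 2 - g ^ 2 + 2 * g - 1) * ∑ i ∈ range n, R (i + 1) * R i
      = (1 - g) * (R (n + 1) ^ 2 - R 1 ^ 2) + g * (g - 1 + f ^ 2) * (R n ^ 2 - R 0 ^ 2)
        + (1 - f ^ 2 - g ^ 2) * ∑ i ∈ range n, (R 1 ^ 2 - g * R 0 ^ 2 - f * R 0 * R 1) * (-g) ^ i := by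
  induction n with
  | zero => simp
  | succ n ih =>
    rw [sum_range_succ, sum_range_succ, hrec n]
    linear_combination ih + (1 - f ^ 2 - g ^ 2) * cassini hrec n

end SecondOrderRecurrence

theorem Finset.sum_Icc_one_eq_sum_range {M : Type*} [AddCommMonoid M] (F : ℕ → M) (n : ℕ) :
    ∑ i ∈ Icc 1 n, F i = ∑ i ∈ range n, F (i + 1) := by
  rw [← Ico_add_one_right_eq_Icc, range_eq_Ico, sum_Ico_add']

theorem stmt_17 (f g h k : ℂ) (R : ℕ → ℂ)
    (h0 : R 0 = h) (h1 : R 1 = k)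
    (hrec : ∀ n, R (n + 2) = f * R (n + 1) + g * R n) :
    ∀ n : ℕ, 1 ≤ n →
      f * (f^2 - g^2 + 2*g - 1) * ∑ i ∈ Finset.Icc 1 n, R i * R (i - 1)
        = (1 - g) * ((R (n+1))^2 - k^2) + g * (g - 1 + f^2) * ((R n)^2 - h^2)
          + (1 - f^2 - g^2) * ∑ i ∈ Finset.Icc 1 n, (k^2 - g*h^2 - f*h*k) * (-g)^(i-1) := by
  intro n _
  subst h0 h1
  simpa only [Finset.sum_Icc_one_eq_sum_range, Nat.add_sub_cancel]
    using SecondOrderRecurrence.mul_sum_range_mul_succ hrec n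
end

section
/- Let f, g, h, k be complex numbers with g ≠ 0, f^2 + 4*g ≠ 0 and g*h^2 - k^2 + f*h*k ≠ 0, and let R : ℕ → ℂ satisfy R 0 = h, R 1 = k, R (n+2) = f * R (n+1) + g * R n. Let d = g*h^2 - k^2 + f*h*k, B = !![0, g; 1, f], and M = (1/d) • !![g*h^2 + f^2*h^2 + k^2 - 2*f*h*k, g*h*(2*k - f*h); h*(2*k - f*h), g*h^2 + k^2]. Then for all n, (R n)^2 = ((-g)^n * d / (f^2 + 4*g)) * Matrix.det (M + (-g)^n • (B⁻¹)^(2*n)). -/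
/-! With `U` the Lucas sequence of `(f, g)` and `B = !![0, g; 1, f]`, one has
`B ^ n = !![U (n+1) - f U n, g U n; U n, U (n+1)]`. Taking determinants gives Cassini's identity
`U (n+1)^2 - f U n U (n+1) - g U n^2 = (-g)^n`, squaring gives the doubling formulas for
`U (2n)` and `U (2n+1)`, and `B⁻¹ ^ (2n) = g^(-2n) • adjugate (B ^ (2n))`. Since every solution of
the recurrence is `R n = h (U (n+1) - f U n) + k U n`, both sides of the claim become rational
functions of `U n` and `U (n+1)` once `(-g)^n` is eliminated by Cassini, and the claim reduces
to a polynomial identity. -/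

open Matrix

section CommRing

variable {α : Type*} [CommRing α] (f g : α)

def lucasU : ℕ → α
  | 0 => 0
  | 1 => 1
  | n + 2 => f * lucasU (n + 1) + g * lucasU n

@[simp] lemma lucasU_zero : lucasU f g 0 = 0 := rfl

@[simp] lemma lucasU_one : lucasU f g 1 = 1 := rfl

lemma lucasU_add_two (n : ℕ) :
    lucasU f g (n + 2) = f * lucasU f g (n + 1) + g * lucasU f g n := rfl

lemma companion_pow (n : ℕ) :
    !![0, g; 1, f] ^ n =
      !![lucasU f g (n + 1) - f * lucasU f g n, g * lucasU f g n;
        lucasU f g n, lucasU f g (n + 1)] := by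
  induction n with
  | zero => simp [one_fin_two]
  | succ n ih =>
    rw [pow_succ, ih, mul_fin_two, show n + 1 + 1 = n + 2 from rfl, lucasU_add_two]
    ext i j
    fin_cases i <;> fin_cases j <;> simp <;> ring

lemma lucasU_cassini (n : ℕ) :
    lucasU f g (n + 1) ^ 2 - f * lucasU f g n * lucasU f g (n + 1) - g * lucasU f g n ^ 2
      = (-g) ^ n := by
  have h := congrArg det (companion_pow f g n)
  rw [det_pow, det_fin_two_of, det_fin_two_of] at h
  linear_combination -h

lemma lucasU_two_mul (n : ℕ) :
    lucasU f g (2 * n) = lucasU f g n * (2 * lucasU f g (n + 1) - f * lucasU f g n) := by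
  have h := congrArg (· 1 0) (companion_pow f g (n + n))
  rw [pow_add, companion_pow, mul_fin_two] at h
  rw [two_mul]
  simp only [of_apply, cons_val', cons_val_zero, cons_val_one, cons_val_fin_one] at h
  linear_combination -h

lemma lucasU_two_mul_add_one (n : ℕ) :
    lucasU f g (2 * n + 1) = lucasU f g (n + 1) ^ 2 + g * lucasU f g n ^ 2 := by
  have h := congrArg (· 1 1) (companion_pow f g (n + n))
  rw [pow_add, companion_pow, mul_fin_two] at h
  rw [two_mul]
  simp only [of_apply, cons_val', cons_val_one, cons_val_fin_one] at h
  linear_combination -h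

lemma eq_lucasU_of_add_two {R : ℕ → α} (hR : ∀ n, R (n + 2) = f * R (n + 1) + g * R n) (n : ℕ) :
    R n = R 0 * (lucasU f g (n + 1) - f * lucasU f g n) + R 1 * lucasU f g n := by
  induction n using Nat.twoStepInduction with
  | zero => simp
  | one => simp [lucasU_add_two]
  | more n ih₀ ih₁ =>
    rw [hR, ih₀, ih₁]
    simp only [lucasU_add_two]
    ring

end CommRing

lemma companion_inv_pow_two_mul {K : Type*} [Field K] (f g : K) (n : ℕ) :
    (!![0, g; 1, f]⁻¹) ^ (2 * n) = (g ^ (2 * n))⁻¹ •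
      !![lucasU f g (2 * n + 1), -(g * lucasU f g (2 * n));
        -lucasU f g (2 * n), lucasU f g (2 * n + 1) - f * lucasU f g (2 * n)] := by
  rw [inv_pow', inv_def, det_pow, det_fin_two_of, companion_pow, adjugate_fin_two_of,
    Ring.inverse_eq_inv', zero_mul, mul_one, zero_sub, (even_two_mul n).neg_pow]

lemma det_inv_smul_add_inv_smul {K : Type*} [Field K] {c d : K} (hc : c ≠ 0) (hd : d ≠ 0)
    (X Y : Matrix (Fin 2) (Fin 2) K) :
    det (d⁻¹ • X + c⁻¹ • Y) = det (c • X + d • Y) / (c * d) ^ 2 := by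
  have h : d⁻¹ • X + c⁻¹ • Y = (c * d)⁻¹ • (c • X + d • Y) := by
    rw [smul_add, smul_smul, smul_smul]
    congr 2 <;> field_simp
  rw [h, det_smul, Fintype.card_fin, inv_pow, inv_mul_eq_div]

theorem stmt_18 (f g h k : ℂ) (hg : g ≠ 0) (hfg : f^2 + 4*g ≠ 0)
    (hd : g*h^2 - k^2 + f*h*k ≠ 0) (R : ℕ → ℂ)
    (h0 : R 0 = h) (h1 : R 1 = k)
    (hrec : ∀ n, R (n + 2) = f * R (n + 1) + g * R n) :
    ∀ n : ℕ,
      (R n)^2 = ((-g)^n * (g*h^2 - k^2 + f*h*k) / (f^2 + 4*g)) * Matrix.det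
        ((1/(g*h^2 - k^2 + f*h*k)) •
            (!![g*h^2 + f^2*h^2 + k^2 - 2*f*h*k, g*h*(2*k - f*h);
                h*(2*k - f*h), g*h^2 + k^2] : Matrix (Fin 2) (Fin 2) ℂ)
          + (-g)^n • ((!![0, g; 1, f] : Matrix (Fin 2) (Fin 2) ℂ)⁻¹)^(2*n)) := by
  intro n
  have hc : (-g) ^ n ≠ 0 := pow_ne_zero n (neg_ne_zero.mpr hg)
  have hscal : (-g) ^ n * (g ^ (2 * n))⁻¹ = ((-g) ^ n)⁻¹ := by
    rw [← (even_two_mul n).neg_pow, pow_mul', sq]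
    field_simp
  rw [companion_inv_pow_two_mul, smul_smul, hscal, one_div, det_inv_smul_add_inv_smul hc hd,
    eq_lucasU_of_add_two f g hrec n, h0, h1, lucasU_two_mul_add_one, lucasU_two_mul]
  rw [← lucasU_cassini f g n] at hc ⊢
  simp only [smul_of, of_add_of, smul_cons, smul_empty, cons_add_cons, empty_add_empty, smul_eq_mul,
    det_fin_two_of]
  rw [div_mul_div_comm, eq_div_iff (mul_ne_zero hfg (pow_ne_zero 2 (mul_ne_zero hc hd)))]
  ring
end
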